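/- arXiv:1206.2113 — 6 statements merged into one kernel-verified Lean document; each statement's English description precedes it below -/
import Mathlib

section
/- Let H > 0 and let γ > γ' > 0. Then there exist an integer N ≥ 1 and a real number c ∈ (0,1) (both depending only on H, γ, γ') such that: whenever m ≥ N and (a_0, …, a_{m-1}) is a finite sequence of reals with |a_i| ≤ H for all i and (1/m) ∑_{i=0}^{m-1} a_i ≥ γ, there exist integers 0 < n_1 < ⋯ < n_k ≤ m with k ≥ max{1, m·c} such that for each 1 ≤ i ≤ k and each J with 1 ≤ J ≤ n_i, one has (1/J) ∑_{j=1}^{J} a_{n_i − j} ≥ γ'. -/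
open Finset

/-- **Pliss lemma** (sifting formulation). For `H > 0` and `γ > γ' > 0` there are
`N ≥ 1` and `c ∈ (0,1)` such that any sequence `a_0, …, a_{m-1}` with `m ≥ N`,
`|a_i| ≤ H`, and average at least `γ`, admits indices `0 < n_1 < ⋯ < n_k ≤ m`
with `k ≥ max {1, m c}` at which all backward averages are at least `γ'`. -/
theorem pliss_lemma (H γ γ' : ℝ) (hH : 0 < H) (hγ' : 0 < γ') (hγ : γ' < γ) :
    ∃ N : ℕ, 1 ≤ N ∧ ∃ c : ℝ, 0 < c ∧ c < 1 ∧
      ∀ m : ℕ, N ≤ m → ∀ a : ℕ → ℝ,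
        (∀ i < m, |a i| ≤ H) →
        γ ≤ (∑ i ∈ Finset.range m, a i) / m →
        ∃ k : ℕ, ∃ n : ℕ → ℕ,
          1 ≤ k ∧ (m : ℝ) * c ≤ k ∧
          (∀ i j, i < j → j < k → n i < n j) ∧
          (∀ i < k, 0 < n i ∧ n i ≤ m) ∧
          (∀ i < k, ∀ J : ℕ, 1 ≤ J → J ≤ n i →
            γ' ≤ (∑ j ∈ Finset.range J, a (n i - 1 - j)) / J) := by
  classical
  have hγγ' : 0 < γ - γ' := sub_pos.2 hγ
  refine ⟨1, le_refl 1, min ((γ - γ')/H) (1/2), lt_min (div_pos hγγ' hH) (by norm_num),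
    lt_of_le_of_lt (min_le_right _ _) (by norm_num), ?_⟩
  intro m hm a ha havg
  set c := min ((γ - γ')/H) (1/2) with hc
  have hm0 : 0 < m := hm
  have hmR : (1:ℝ) ≤ (m:ℝ) := by exact_mod_cast hm
  set S : ℕ → ℝ := fun n => ∑ i ∈ Finset.range n, (a i - γ') with hSdef
  -- counting lemma
  have key : ∀ n, n ≤ m → ∀ j ≤ n,
      S j ≤ H * ((Finset.Icc 1 n).filter (fun p => ∀ q < p, S q ≤ S p)).card := by
    intro n
    induction n with
    | zero =>
      intro _ j hj
      interval_cases j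
      simp [hSdef]
    | succ n ih =>
      intro hn j hj
      have hnm : n ≤ m := by omega
      set Gn := (Finset.Icc 1 n).filter (fun p => ∀ q < p, S q ≤ S p) with hGn
      set Gn1 := (Finset.Icc 1 (n+1)).filter (fun p => ∀ q < p, S q ≤ S p) with hGn1
      have hsub : Gn ⊆ Gn1 :=
        Finset.filter_subset_filter _ (Finset.Icc_subset_Icc_right (by omega))
      have hcards : (Gn.card : ℝ) ≤ Gn1.card := by
        exact_mod_cast Finset.card_le_card hsub
      rcases Nat.lt_or_ge j (n+1) with hjn | hjn
      · calc S j ≤ H * Gn.card := ih hnm j (by omega)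
          _ ≤ H * Gn1.card := by
            exact mul_le_mul_of_nonneg_left hcards hH.le
      · have hj' : j = n + 1 := by omega
        subst hj'
        by_cases hg : ∀ q < n+1, S q ≤ S (n+1)
        · have hmem : n + 1 ∈ Gn1 := by
            simp only [hGn1, Finset.mem_filter, Finset.mem_Icc]
            exact ⟨⟨by omega, le_rfl⟩, hg⟩
          have hnotin : n + 1 ∉ Gn := by
            simp only [hGn, Finset.mem_filter, Finset.mem_Icc]
            intro h; omega
          have hins : insert (n+1) Gn ⊆ Gn1 := by
            intro x hx
            rcases Finset.mem_insert.1 hx with rfl | hx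
            · exact hmem
            · exact hsub hx
          have hcard1 : Gn.card + 1 ≤ Gn1.card := by
            have := Finset.card_le_card hins
            rwa [Finset.card_insert_of_notMem hnotin] at this
          have han : a n ≤ H := (abs_le.1 (ha n (by omega))).2
          have hSn1 : S (n+1) = S n + (a n - γ') := by
            simp [hSdef, Finset.sum_range_succ]
            push_cast
            ring
          have hSn : S n ≤ H * Gn.card := ih hnm n le_rfl
          have : S (n+1) ≤ H * (Gn.card + 1) := by
            rw [hSn1]; nlinarith
          calc S (n+1) ≤ H * (Gn.card + 1) := this
            _ ≤ H * Gn1.card := by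
              apply mul_le_mul_of_nonneg_left _ hH.le
              exact_mod_cast hcard1
        · push_neg at hg
          obtain ⟨q, hq, hSq⟩ := hg
          calc S (n+1) ≤ S q := hSq.le
            _ ≤ H * Gn.card := ih hnm q (by omega)
            _ ≤ H * Gn1.card := mul_le_mul_of_nonneg_left hcards hH.le
  set G := (Finset.Icc 1 m).filter (fun p => ∀ q < p, S q ≤ S p) with hGdef
  have hSm : (m:ℝ) * (γ - γ') ≤ S m := by
    have hsum : (m:ℝ) * γ ≤ ∑ i ∈ Finset.range m, a i := by
      rw [← le_div_iff₀' (by positivity : (0:ℝ) < (m:ℝ))] at *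
      · exact havg
    have : S m = (∑ i ∈ Finset.range m, a i) - m * γ' := by
      simp [hSdef, Finset.sum_sub_distrib, Finset.card_range, mul_comm]
    rw [this]; nlinarith
  have hcount : (m:ℝ) * (γ - γ') ≤ H * G.card := hSm.trans (key m le_rfl m le_rfl)
  set k := G.card with hk
  have hk1 : 1 ≤ k := by
    by_contra h
    have : k = 0 := by omega
    rw [this] at hcount
    simp at hcount
    nlinarith
  have hkc : (m:ℝ) * c ≤ k := by
    have h1 : c ≤ (γ - γ')/H := min_le_left _ _
    have h2 : (m:ℝ) * ((γ - γ')/H) ≤ k := by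
      rw [mul_div_assoc', div_le_iff₀ hH]
      nlinarith
    calc (m:ℝ) * c ≤ (m:ℝ) * ((γ - γ')/H) := by nlinarith
      _ ≤ k := h2
  set e := G.orderEmbOfFin (rfl : G.card = k) with he
  refine ⟨k, fun i => if h : i < k then e ⟨i, h⟩ else 0, hk1, hkc, ?_, ?_, ?_⟩
  · intro i j hij hjk
    simp only [dif_pos (hij.trans hjk), dif_pos hjk]
    exact e.strictMono (by exact hij)
  · intro i hi
    simp only [dif_pos hi]
    have := G.orderEmbOfFin_mem (rfl : G.card = k) ⟨i, hi⟩
    have h2 := Finset.mem_filter.1 this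
    have h3 := Finset.mem_Icc.1 h2.1
    exact ⟨h3.1, h3.2⟩
  · intro i hi J hJ1 hJ
    simp only [dif_pos hi] at hJ ⊢
    set p := e ⟨i, hi⟩ with hp
    have hmem := G.orderEmbOfFin_mem (rfl : G.card = k) ⟨i, hi⟩
    have hmem2 := Finset.mem_filter.1 hmem
    have hgood : ∀ q < p, S q ≤ S p := hmem2.2
    have hJp : J ≤ p := hJ
    have hJ0 : (0:ℝ) < J := by exact_mod_cast hJ1
    have hgoodJ : S (p - J) ≤ S p := hgood (p - J) (by omega)
    have hreindex : ∑ j ∈ Finset.range J, a (p - 1 - j) = ∑ t ∈ Finset.Ico (p - J) p, a t := by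
      rw [Finset.sum_Ico_eq_sum_range]
      have hpp : p - (p - J) = J := by omega
      rw [hpp, ← Finset.sum_range_reflect]
      apply Finset.sum_congr rfl
      intro j hj
      rw [Finset.mem_range] at hj
      congr 1
      omega
    have hIco : ∑ t ∈ Finset.Ico (p - J) p, (a t - γ') = S p - S (p - J) := by
      rw [hSdef]
      exact Finset.sum_Ico_eq_sub _ (by omega)
    have hIco' : ∑ t ∈ Finset.Ico (p - J) p, (a t - γ')
        = (∑ t ∈ Finset.Ico (p - J) p, a t) - J * γ' := by
      rw [Finset.sum_sub_distrib, Finset.sum_const, Nat.card_Ico]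
      have : p - (p - J) = J := by omega
      rw [this]
      ring_nf
    rw [le_div_iff₀ hJ0, hreindex]
    have : (0:ℝ) ≤ S p - S (p - J) := by linarith
    rw [hIco'] at hIco
    linarith
end

section
/- Let (a_0, …, a_{m-1}) be a sequence of reals with |a_i| ≤ H, and suppose (1/m) ∑_{i=0}^{m-1} a_i ≥ γ for some γ > 0. Then for any 0 < γ' < γ there exists at least one index n with 0 < n ≤ m such that (1/J) ∑_{j=1}^{J} a_{n−j} ≥ γ' for all 1 ≤ J ≤ n. -/
open Finset

/-- Weak form of the Pliss lemma: a finite sequence with average at least `γ > 0`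
has at least one Pliss time `n ∈ (0, m]` for any `0 < γ' < γ`: every backward
average ending at `n` is at least `γ'`. -/
theorem pliss_time_exists (H : ℝ) (m : ℕ) (hm : 1 ≤ m) (a : ℕ → ℝ)
    (hbd : ∀ i < m, |a i| ≤ H) (γ γ' : ℝ) (hγ : 0 < γ)
    (havg : γ ≤ (∑ i ∈ Finset.range m, a i) / m)
    (hγ'pos : 0 < γ') (hγ'lt : γ' < γ) :
    ∃ n : ℕ, 0 < n ∧ n ≤ m ∧
      ∀ J : ℕ, 1 ≤ J → J ≤ n →
        γ' ≤ (∑ j ∈ Finset.range J, a (n - 1 - j)) / J := by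
  set S : ℕ → ℝ := fun n => ∑ i ∈ Finset.range n, (a i - γ') with hS
  obtain ⟨n, hn, hmax⟩ := Finset.exists_max_image (Finset.range (m+1)) S ⟨0, by simp⟩
  simp only [Finset.mem_range] at hn
  have hmpos : (0:ℝ) < m := by exact_mod_cast hm
  have hsum : (m:ℝ) * γ ≤ ∑ i ∈ Finset.range m, a i := by
    rw [le_div_iff₀ hmpos] at havg
    linarith
  have hSexp : ∀ k, S k = (∑ i ∈ Finset.range k, a i) - k * γ' := by
    intro k
    simp [hS, Finset.sum_sub_distrib, mul_comm]
  have hSm : 0 < S m := by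
    rw [hSexp]
    have : (m:ℝ) * γ' < (m:ℝ) * γ := by
      exact mul_lt_mul_of_pos_left hγ'lt hmpos
    linarith
  have hSn : 0 < S n := lt_of_lt_of_le hSm (hmax m (by simp))
  have hn0 : 0 < n := by
    rcases Nat.eq_zero_or_pos n with h | h
    · exfalso; rw [h] at hSn; simp [hS] at hSn
    · exact h
  refine ⟨n, hn0, Nat.lt_succ_iff.mp hn, ?_⟩
  intro J hJ1 hJn
  have key : S (n - J) ≤ S n := hmax _ (by simp; omega)
  have hreidx : ∑ j ∈ Finset.range J, a (n - 1 - j)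
      = ∑ i ∈ Finset.range n, a i - ∑ i ∈ Finset.range (n - J), a i := by
    have h1 : ∑ j ∈ Finset.range J, a (n - 1 - j)
        = ∑ j ∈ Finset.range J, a (n - J + j) := by
      rw [← Finset.sum_range_reflect]
      refine Finset.sum_congr rfl fun j hj => ?_
      simp only [Finset.mem_range] at hj
      congr 1
      omega
    have h2 : (n - J) + J = n := by omega
    have h3 : ∑ i ∈ Finset.range ((n - J) + J), a i
        = (∑ i ∈ Finset.range (n - J), a i) + ∑ j ∈ Finset.range J, a ((n - J) + j) :=
      Finset.sum_range_add a _ _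
    rw [h2] at h3
    rw [h1]
    linarith
  have hJpos : (0:ℝ) < J := by exact_mod_cast hJ1
  rw [le_div_iff₀ hJpos]
  rw [hSexp, hSexp] at key
  have hcast : ((n - J : ℕ) : ℝ) = (n : ℝ) - J := by
    push_cast [Nat.cast_sub hJn]; ring
  rw [hcast] at key
  rw [hreidx]
  nlinarith [key]
end

section
/- Let θ : X → X be a measurable map preserving a probability measure μ, and let φ : ℕ × X → ℝ be a subadditive integrable cocycle with φ̄(x) = lim φ(t,x)/t given by the Kingman theorem. Then for every t ≥ 1 and μ-a.e. x, the θ^t-Birkhoff-average limit h_t(x) := lim_{k→∞} (1/k) ∑_{j=0}^{k−1} [ (1/t) φ(t, θ^{jt}(x)) − φ̄(x) ] exists and satisfies h_t(x) ≥ 0. -/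
/-!
The limit `c(x)` of the sampled averages is supplied by Birkhoff's pointwise ergodic theorem
for `θ^t` and `g = φ(t,·)/t`. That theorem is derived from Garsia's maximal inequality: on a
`T`-invariant set on which the Birkhoff sums of `g - β` are unbounded above, `∫ (g - β) ≥ 0`.
This makes null both the set where the averages are unbounded and, for rationals `q < q'`, the
set where they oscillate across `[q, q']`.

Subadditivity along the times `t, 2t, …, kt` gives `φ(kt, x) ≤ ∑_{j<k} φ(t, θ^{jt} x)`;
dividing by `kt` and letting `k → ∞` yields `φ̄(x) ≤ c(x)`.
-/

open MeasureTheory Filter Finset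

theorem not_bddAbove_of_frequently_lt {s : ℕ → ℝ} {β b : ℝ} (hβb : β < b)
    (h : ∃ᶠ n in atTop, b < s n / n) : ¬BddAbove (Set.range fun n => s n - n * β) := by
  rintro ⟨C, hC⟩
  have hgrow : Tendsto (fun n : ℕ => n * (b - β)) atTop atTop :=
    tendsto_natCast_atTop_atTop.atTop_mul_const (sub_pos.2 hβb)
  obtain ⟨n, hn, hCn, hn1⟩ :=
    (h.and_eventually ((hgrow.eventually_gt_atTop C).and (eventually_ge_atTop 1))).exists
  have hn0 : (0 : ℝ) < n := by exact_mod_cast hn1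
  rw [lt_div_iff₀ hn0] at hn
  linarith [hC ⟨n, rfl⟩]

theorem isBoundedUnder_le_div_of_bddAbove {s : ℕ → ℝ} {β : ℝ}
    (h : BddAbove (Set.range fun n => s n - n * β)) :
    IsBoundedUnder (· ≤ ·) atTop fun n => s n / n := by
  obtain ⟨C, hC⟩ := h
  refine isBoundedUnder_of_eventually_le (a := β + max C 0) ?_
  filter_upwards [eventually_ge_atTop 1] with n hn
  have hn1 : (1 : ℝ) ≤ n := by exact_mod_cast hn
  rw [div_le_iff₀ (by linarith)]
  nlinarith [hC ⟨n, rfl⟩, le_max_left C 0, le_max_right C 0]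

theorem exists_tendsto_div_of_bddAbove (s : ℕ → ℝ)
    (hup : ∃ β : ℝ, BddAbove (Set.range fun n => s n - n * β))
    (hlow : ∃ α : ℝ, BddAbove (Set.range fun n => -s n - n * α))
    (hgap : ∀ q q' : ℚ, q < q' →
      BddAbove (Set.range fun n => s n - n * q') ∨ BddAbove (Set.range fun n => -s n - n * -q)) :
    ∃ c, Tendsto (fun n => s n / n) atTop (nhds c) := by
  obtain ⟨β, hβ⟩ := hup
  obtain ⟨α, hα⟩ := hlow
  have hle := isBoundedUnder_le_div_of_bddAbove hβ
  have hge : IsBoundedUnder (· ≥ ·) atTop fun n => s n / n := by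
    simpa [neg_div, isBoundedUnder_le_neg] using isBoundedUnder_le_div_of_bddAbove hα
  set L := limsup (fun n => s n / n) atTop
  set l := liminf (fun n => s n / n) atTop
  suffices L ≤ l from ⟨L, tendsto_of_liminf_eq_limsup
    (le_antisymm this (liminf_le_limsup hle hge)).symm rfl hle hge⟩
  by_contra! hlL
  obtain ⟨q, hlq, hqL⟩ := exists_rat_btwn hlL
  obtain ⟨q', hqq', hq'L⟩ := exists_rat_btwn hqL
  rcases hgap q q' (by exact_mod_cast hqq') with h | h
  · refine not_bddAbove_of_frequently_lt (b := (q' + L) / 2) (by linarith) ?_ h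
    exact frequently_lt_of_lt_limsup hge.isCoboundedUnder_le (by linarith)
  · refine not_bddAbove_of_frequently_lt (b := -(l + q) / 2) (by linarith) ?_ h
    refine (frequently_lt_of_liminf_lt hle.isCoboundedUnder_ge (b := (l + q) / 2)
      (by linarith)).mono fun n hn => ?_
    rw [neg_div, neg_div]
    exact neg_lt_neg hn

section BirkhoffSum

variable {X : Type*} {T : X → X} {g : X → ℝ}

theorem birkhoffSum_sub_const (T : X → X) (g : X → ℝ) (c : ℝ) (n : ℕ) (x : X) :
    birkhoffSum T (fun y => g y - c) n x = birkhoffSum T g n x - n * c := by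
  simp [birkhoffSum, Finset.sum_sub_distrib]

noncomputable def maxBirkhoffSum (T : X → X) (g : X → ℝ) (N : ℕ) : X → ℝ :=
  partialSups (birkhoffSum T g) N

theorem birkhoffSum_le_maxBirkhoffSum {n N : ℕ} (h : n ≤ N) (x : X) :
    birkhoffSum T g n x ≤ maxBirkhoffSum T g N x :=
  le_partialSups_of_le (birkhoffSum T g) h x

theorem maxBirkhoffSum_nonneg (N : ℕ) (x : X) : 0 ≤ maxBirkhoffSum T g N x := by
  simpa using birkhoffSum_le_maxBirkhoffSum (T := T) (g := g) N.zero_le x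

theorem maxBirkhoffSum_le {N : ℕ} {x : X} {a : ℝ} (h : ∀ n ≤ N, birkhoffSum T g n x ≤ a) :
    maxBirkhoffSum T g N x ≤ a := by
  rw [maxBirkhoffSum, Pi.partialSups_apply]
  exact partialSups_le _ _ _ h

theorem maxBirkhoffSum_monotone : Monotone (maxBirkhoffSum T g) :=
  partialSups_monotone _

theorem maxBirkhoffSum_le_max_zero (N : ℕ) (x : X) :
    maxBirkhoffSum T g N x ≤ max 0 (g x + maxBirkhoffSum T g N (T x)) := by
  refine maxBirkhoffSum_le fun n hn => ?_
  rcases n with _ | n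
  · simp
  · rw [birkhoffSum_succ']
    exact le_max_of_le_right <| add_le_add_right
      (birkhoffSum_le_maxBirkhoffSum (by omega) _) _

theorem maxBirkhoffSum_sub_le_indicator (N : ℕ) (x : X) :
    maxBirkhoffSum T g N x - maxBirkhoffSum T g N (T x) ≤
      {y | 0 < maxBirkhoffSum T g N y}.indicator g x := by
  have := maxBirkhoffSum_le_max_zero (T := T) (g := g) N x
  rw [Set.indicator_apply]
  split_ifs with hx <;> simp only [Set.mem_ofPred_eq] at hx
  · linarith [(le_max_iff.1 this).resolve_left hx.not_ge]
  · linarith [maxBirkhoffSum_nonneg (T := T) (g := g) N (T x)]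

theorem iterate_mem_iff_of_preimage_eq {E : Set X} (hE : T ⁻¹' E = E) (k : ℕ) (x : X) :
    T^[k] x ∈ E ↔ x ∈ E := by
  rw [← Set.mem_preimage, Set.preimage_iterate_eq, Function.iterate_fixed hE]

theorem birkhoffSum_indicator_of_preimage_eq {E : Set X} (hE : T ⁻¹' E = E) (n : ℕ) :
    birkhoffSum T (E.indicator g) n = E.indicator (birkhoffSum T g n) := by
  ext x
  by_cases hx : x ∈ E <;>
    simp [birkhoffSum, iterate_mem_iff_of_preimage_eq hE, hx]

def unboundedBirkhoffSumSet (T : X → X) (g : X → ℝ) : Set X :=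
  {x | ¬BddAbove (Set.range fun n => birkhoffSum T g n x)}

theorem bddAbove_birkhoffSum_apply_iff (x : X) :
    BddAbove (Set.range fun n => birkhoffSum T g n (T x)) ↔
      BddAbove (Set.range fun n => birkhoffSum T g n x) := by
  simp only [bddAbove_def, Set.forall_mem_range]
  constructor
  · rintro ⟨C, hC⟩
    refine ⟨max 0 (g x + C), fun n => ?_⟩
    cases n with
    | zero => simp
    | succ n => exact birkhoffSum_succ' T g n x ▸ le_max_of_le_right (by linarith [hC n])
  · rintro ⟨C, hC⟩
    refine ⟨C - g x, fun n => ?_⟩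
    linarith [birkhoffSum_succ' T g n x ▸ hC (n + 1)]

theorem preimage_unboundedBirkhoffSumSet :
    T ⁻¹' unboundedBirkhoffSumSet T g = unboundedBirkhoffSumSet T g := by
  ext x
  exact not_congr (bddAbove_birkhoffSum_apply_iff x)

variable [MeasurableSpace X]

theorem measurable_birkhoffSum (hT : Measurable T) (hg : Measurable g) (n : ℕ) :
    Measurable (birkhoffSum T g n) :=
  Finset.measurable_sum _ fun k _ => hg.comp (hT.iterate k)

theorem measurable_maxBirkhoffSum (hT : Measurable T) (hg : Measurable g) (N : ℕ) :
    Measurable (maxBirkhoffSum T g N) :=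
  Finset.measurable_sup' nonempty_Iic fun n _ => measurable_birkhoffSum hT hg n

theorem measurableSet_unboundedBirkhoffSumSet (hT : Measurable T) (hg : Measurable g) :
    MeasurableSet (unboundedBirkhoffSumSet T g) :=
  (measurableSet_bddAbove_range (measurable_birkhoffSum hT hg)).compl

variable {μ : Measure X}

theorem integrable_birkhoffSum (hT : MeasurePreserving T μ μ) (hg : Integrable g μ)
    (n : ℕ) : Integrable (birkhoffSum T g n) μ :=
  integrable_finsetSum _ fun k _ => (hT.iterate k).integrable_comp_of_integrable hg

theorem integrable_maxBirkhoffSum (hT : MeasurePreserving T μ μ) (hg : Integrable g μ)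
    (N : ℕ) : Integrable (maxBirkhoffSum T g N) μ :=
  Finset.sup'_induction nonempty_Iic (p := (Integrable · μ)) _
    (fun _ h₁ _ h₂ => h₁.sup h₂) fun n _ => integrable_birkhoffSum hT hg n

theorem setIntegral_maxBirkhoffSum_pos_nonneg (hT : MeasurePreserving T μ μ)
    (hgm : Measurable g) (hg : Integrable g μ) (N : ℕ) :
    0 ≤ ∫ x in {x | 0 < maxBirkhoffSum T g N x}, g x ∂μ := by
  set M := maxBirkhoffSum T g N
  have hM : Integrable M μ := integrable_maxBirkhoffSum hT hg N
  have hMT : Integrable (fun x => M (T x)) μ := hT.integrable_comp_of_integrable hM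
  have hinv : ∫ x, M (T x) ∂μ = ∫ x, M x ∂μ := by
    rw [← integral_map hT.aemeasurable (by rw [hT.map_eq]; exact hM.aestronglyMeasurable),
      hT.map_eq]
  have hpos : MeasurableSet {x | 0 < M x} :=
    measurableSet_lt measurable_const (measurable_maxBirkhoffSum hT.measurable hgm N)
  calc (0 : ℝ) = ∫ x, (M x - M (T x)) ∂μ := by rw [integral_sub hM hMT, hinv, sub_self]
    _ ≤ ∫ x, {x | 0 < M x}.indicator g x ∂μ :=
      integral_mono (hM.sub hMT) (hg.indicator hpos) (maxBirkhoffSum_sub_le_indicator N)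
    _ = _ := integral_indicator hpos

theorem setIntegral_exists_birkhoffSum_pos_nonneg (hT : MeasurePreserving T μ μ)
    (hgm : Measurable g) (hg : Integrable g μ) :
    0 ≤ ∫ x in {x | ∃ n, 0 < birkhoffSum T g n x}, g x ∂μ := by
  have hunion : {x | ∃ n, 0 < birkhoffSum T g n x} = ⋃ N, {x | 0 < maxBirkhoffSum T g N x} := by
    ext x
    simp only [Set.mem_ofPred_eq, Set.mem_iUnion]
    exact ⟨fun ⟨n, hn⟩ => ⟨n, hn.trans_le (birkhoffSum_le_maxBirkhoffSum le_rfl x)⟩,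
      fun ⟨N, hN⟩ => by
        by_contra! h
        exact hN.not_ge (maxBirkhoffSum_le fun n _ => h n)⟩
  rw [hunion]
  refine ge_of_tendsto (tendsto_setIntegral_of_monotone (fun N => ?_) ?_ hg.integrableOn)
    (Eventually.of_forall (setIntegral_maxBirkhoffSum_pos_nonneg hT hgm hg))
  · exact measurableSet_lt measurable_const (measurable_maxBirkhoffSum hT.measurable hgm N)
  · exact fun M N hMN x (hx : 0 < _) => hx.trans_le (maxBirkhoffSum_monotone hMN x)

theorem setIntegral_nonneg_of_preimage_eq (hT : MeasurePreserving T μ μ)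
    (hgm : Measurable g) (hg : Integrable g μ) {E : Set X} (hEm : MeasurableSet E)
    (hE : T ⁻¹' E = E) (hpos : ∀ x ∈ E, ∃ n, 0 < birkhoffSum T g n x) :
    0 ≤ ∫ x in E, g x ∂μ := by
  have hset : {x | ∃ n, 0 < birkhoffSum T (E.indicator g) n x} = E := by
    ext x
    simp only [birkhoffSum_indicator_of_preimage_eq hE, Set.mem_ofPred_eq]
    by_cases hx : x ∈ E <;> simp [hx, hpos]
  have := setIntegral_exists_birkhoffSum_pos_nonneg hT (hgm.indicator hEm) (hg.indicator hEm)
  rwa [hset, setIntegral_indicator hEm, Set.inter_self] at this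

theorem mul_measureReal_le_setIntegral [IsFiniteMeasure μ] (hT : MeasurePreserving T μ μ)
    (hgm : Measurable g) (hg : Integrable g μ) {β : ℝ} {D : Set X} (hDm : MeasurableSet D)
    (hD : T ⁻¹' D = D) (hDsub : D ⊆ unboundedBirkhoffSumSet T (fun x => g x - β)) :
    β * μ.real D ≤ ∫ x in D, g x ∂μ := by
  have := setIntegral_nonneg_of_preimage_eq hT (hgm.sub_const β)
    (hg.sub (integrable_const β)) hDm hD fun x hx => by
      obtain ⟨_, ⟨n, rfl⟩, hn⟩ := not_bddAbove_iff.1 (hDsub hx) 0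
      exact ⟨n, hn⟩
  rw [integral_sub hg.integrableOn (integrableOn_const), setIntegral_const, smul_eq_mul] at this
  linarith

theorem measure_iInter_unboundedBirkhoffSumSet_eq_zero [IsFiniteMeasure μ]
    (hT : MeasurePreserving T μ μ) (hgm : Measurable g) (hg : Integrable g μ) :
    μ (⋂ k : ℕ, unboundedBirkhoffSumSet T (fun x => g x - k)) = 0 := by
  set D := ⋂ k : ℕ, unboundedBirkhoffSumSet T (fun x => g x - k)
  have hDm : MeasurableSet D := MeasurableSet.iInter fun k =>
    measurableSet_unboundedBirkhoffSumSet hT.measurable (hgm.sub_const _)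
  have hD : T ⁻¹' D = D := by
    simp only [D, Set.preimage_iInter, preimage_unboundedBirkhoffSumSet]
  rw [← measureReal_eq_zero_iff]
  by_contra hne
  have hpos : 0 < μ.real D := measureReal_nonneg.lt_of_ne' hne
  obtain ⟨k, hk⟩ := exists_nat_gt ((∫ x in D, g x ∂μ) / μ.real D)
  rw [div_lt_iff₀ hpos] at hk
  linarith [mul_measureReal_le_setIntegral hT hgm hg hDm hD (Set.iInter_subset _ k)]

/-- The second set is where `n ↦ S_n g - n α` is unbounded below. -/
theorem measure_unboundedBirkhoffSumSet_inter_eq_zero [IsFiniteMeasure μ]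
    (hT : MeasurePreserving T μ μ) (hgm : Measurable g) (hg : Integrable g μ) {α β : ℝ}
    (hαβ : α < β) :
    μ (unboundedBirkhoffSumSet T (fun x => g x - β) ∩
      unboundedBirkhoffSumSet T (fun x => -g x - -α)) = 0 := by
  set D := unboundedBirkhoffSumSet T (fun x => g x - β) ∩
    unboundedBirkhoffSumSet T (fun x => -g x - -α)
  have hDm : MeasurableSet D :=
    (measurableSet_unboundedBirkhoffSumSet hT.measurable (hgm.sub_const _)).inter
      (measurableSet_unboundedBirkhoffSumSet hT.measurable (hgm.neg.sub_const _))
  have hD : T ⁻¹' D = D := by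
    simp only [D, Set.preimage_inter, preimage_unboundedBirkhoffSumSet]
  have h₁ := mul_measureReal_le_setIntegral hT hgm hg hDm hD Set.inter_subset_left
  have h₂ := mul_measureReal_le_setIntegral hT hgm.neg hg.neg hDm hD Set.inter_subset_right
  simp only [Pi.neg_apply, integral_neg] at h₂
  rw [← measureReal_eq_zero_iff]
  nlinarith [measureReal_nonneg (μ := μ) (s := D)]

theorem ae_exists_tendsto_birkhoffAverage [IsFiniteMeasure μ] (hT : MeasurePreserving T μ μ)
    (hgm : Measurable g) (hg : Integrable g μ) :
    ∀ᵐ x ∂μ, ∃ c, Tendsto (birkhoffAverage ℝ T g · x) atTop (nhds c) := by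
  have hup := measure_eq_zero_iff_ae_notMem.1
    (measure_iInter_unboundedBirkhoffSumSet_eq_zero hT hgm hg)
  have hlow := measure_eq_zero_iff_ae_notMem.1
    (measure_iInter_unboundedBirkhoffSumSet_eq_zero hT hgm.neg hg.neg)
  have hgap : ∀ᵐ x ∂μ, ∀ q q' : ℚ, q < q' →
      x ∉ unboundedBirkhoffSumSet T (fun x => g x - q') ∩
        unboundedBirkhoffSumSet T (fun x => -g x - -q) := by
    simp only [ae_all_iff, eventually_imp_distrib_left]
    exact fun q q' h => measure_eq_zero_iff_ae_notMem.1
      (measure_unboundedBirkhoffSumSet_inter_eq_zero hT hgm hg (by exact_mod_cast h))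
  filter_upwards [hup, hlow, hgap] with x hx₁ hx₂ hx₃
  simp only [birkhoffAverage, smul_eq_mul, inv_mul_eq_div]
  simp only [Set.mem_iInter, not_forall, unboundedBirkhoffSumSet, Set.mem_ofPred_eq, not_not,
    birkhoffSum_sub_const, Set.mem_inter_iff, not_and_or, ← Pi.neg_def, birkhoffSum_neg,
    Pi.neg_apply] at hx₁ hx₂ hx₃
  obtain ⟨k, hk⟩ := hx₁
  obtain ⟨k', hk'⟩ := hx₂
  exact exists_tendsto_div_of_bddAbove _ ⟨k, hk⟩ ⟨k', hk'⟩ hx₃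

end BirkhoffSum

theorem birkhoffSum_iterate {X M : Type*} [AddCommMonoid M] (θ : X → X) (f : X → M) (t k : ℕ)
    (x : X) : birkhoffSum θ^[t] f k x = ∑ j ∈ range k, f (θ^[j * t] x) :=
  Finset.sum_congr rfl fun j _ => by rw [← Function.iterate_mul, mul_comm]

theorem le_birkhoffSum_iterate_of_subadditive {X : Type*} {θ : X → X} {φ : ℕ → X → ℝ}
    {x : X}
    (hsub : ∀ m n, 1 ≤ m → 1 ≤ n → φ (m + n) x ≤ φ m x + φ n (θ^[m] x)) {t k : ℕ}
    (ht : 1 ≤ t) (hk : 1 ≤ k) : φ (k * t) x ≤ birkhoffSum θ^[t] (φ t) k x := by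
  induction k, hk using Nat.le_induction with
  | base => simp
  | succ k hk ih =>
    rw [birkhoffSum_succ, ← Function.iterate_mul, mul_comm t k, add_one_mul]
    linarith [hsub (k * t) t (Nat.mul_pos hk ht) ht]

theorem div_le_birkhoffAverage_iterate_of_subadditive {X : Type*} {θ : X → X}
    {φ : ℕ → X → ℝ} {x : X}
    (hsub : ∀ m n, 1 ≤ m → 1 ≤ n → φ (m + n) x ≤ φ m x + φ n (θ^[m] x)) {t k : ℕ}
    (ht : 1 ≤ t) (hk : 1 ≤ k) :
    φ (k * t) x / (k * t : ℕ) ≤ birkhoffAverage ℝ θ^[t] (fun y => φ t y / t) k x := by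
  have := le_birkhoffSum_iterate_of_subadditive hsub ht hk
  rw [birkhoffSum_iterate] at this
  simp only [birkhoffAverage, birkhoffSum_iterate, smul_eq_mul, ← Finset.sum_div]
  push_cast
  rw [inv_mul_eq_div, div_div, mul_comm (t : ℝ)]
  gcongr

theorem sampled_average_dominates_kingman_general
    {X : Type*} [MeasurableSpace X] (μ : Measure X) [IsProbabilityMeasure μ]
    (θ : X → X) (hθ : MeasurePreserving θ μ μ)
    (φ : ℕ → X → ℝ) (hmeas : ∀ t, Measurable (φ t))
    (hsub : ∀ k₁ k₂ : ℕ, 1 ≤ k₁ → 1 ≤ k₂ →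
      ∀ᵐ x ∂μ, φ (k₁ + k₂) x ≤ φ k₁ x + φ k₂ (θ^[k₁] x))
    (hint : ∀ t : ℕ, 1 ≤ t → Integrable (φ t) μ)
    (φbar : X → ℝ)
    (hφbar : ∀ᵐ x ∂μ, Tendsto (fun t : ℕ => φ t x / t) atTop (nhds (φbar x))) :
    ∀ t : ℕ, 1 ≤ t →
      ∀ᵐ x ∂μ, ∃ h : ℝ, 0 ≤ h ∧
        Tendsto (fun k : ℕ => (1 / (k : ℝ)) *
            ∑ j ∈ Finset.range k, (φ t (θ^[j * t] x) / t - φbar x))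
          atTop (nhds h) := by
  intro t ht
  have hsub' : ∀ᵐ x ∂μ, ∀ m n : ℕ, 1 ≤ m → 1 ≤ n →
      φ (m + n) x ≤ φ m x + φ n (θ^[m] x) := by
    simpa only [ae_all_iff, eventually_imp_distrib_left] using hsub
  have hbirk := ae_exists_tendsto_birkhoffAverage (hθ.iterate t)
    ((hmeas t).div_const (t : ℝ)) ((hint t ht).div_const (t : ℝ))
  filter_upwards [hbirk, hsub', hφbar] with x ⟨c, hc⟩ hsubx hlim
  have hsample : Tendsto (fun k : ℕ => φ (k * t) x / (k * t : ℕ)) atTop (nhds (φbar x)) :=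
    hlim.comp (tendsto_id.atTop_mul_const' ht)
  have hφbar_le : φbar x ≤ c := le_of_tendsto_of_tendsto hsample hc <| eventually_atTop.2
    ⟨1, fun k hk => div_le_birkhoffAverage_iterate_of_subadditive hsubx ht hk⟩
  refine ⟨c - φbar x, sub_nonneg.2 hφbar_le, (hc.sub_const _).congr' ?_⟩
  filter_upwards [eventually_ge_atTop 1] with k hk
  have hk0 : (k : ℝ) ≠ 0 := by positivity
  rw [← birkhoffSum_iterate θ (fun y => φ t y / t - φbar x), birkhoffSum_sub_const,
    birkhoffAverage, smul_eq_mul]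
  field_simp

/-- For a subadditive integrable cocycle `φ` over a measure-preserving map `θ`
with Kingman limit `φ̄`, for every `t ≥ 1` and a.e. `x` the Birkhoff average under
`θ^t` of `(1/t) φ(t,·) − φ̄` converges and its limit is nonnegative. -/
theorem sampled_average_dominates_kingman
    {X : Type*} [MeasurableSpace X] (μ : Measure X) [IsProbabilityMeasure μ]
    (θ : X → X) (hθ : MeasurePreserving θ μ μ)
    (φ : ℕ → X → ℝ) (hmeas : ∀ t, Measurable (φ t))
    (hsub : ∀ k₁ k₂ : ℕ, 1 ≤ k₁ → 1 ≤ k₂ →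
      ∀ᵐ x ∂μ, φ (k₁ + k₂) x ≤ φ k₁ x + φ k₂ (θ^[k₁] x))
    (hint : ∀ t : ℕ, 1 ≤ t → Integrable (φ t) μ)
    (φbar : X → ℝ) (hφbarInt : Integrable φbar μ)
    (hφbar : ∀ᵐ x ∂μ, Tendsto (fun t : ℕ => φ t x / t) atTop (nhds (φbar x))) :
    ∀ t : ℕ, 1 ≤ t →
      ∀ᵐ x ∂μ, ∃ h : ℝ, 0 ≤ h ∧
        Tendsto (fun k : ℕ => (1 / (k : ℝ)) *
            ∑ j ∈ Finset.range k, (φ t (θ^[j * t] x) / t - φbar x))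
          atTop (nhds h) :=
  sampled_average_dominates_kingman_general μ θ hθ φ hmeas hsub hint φbar hφbar
end

section
/- Let θ : X → X be measure-preserving for a probability measure μ, let φ be a subadditive integrable cocycle with Kingman limit φ̄, and for t ≥ 1 set h_t(x) = lim_{k→∞} (1/k) ∑_{j=0}^{k−1} [(1/t) φ(t, θ^{jt}(x)) − φ̄(x)] (defined μ-a.e.). Then for μ-a.e. x, h_{2t}(x) ≤ h_t(x). -/
open MeasureTheory Filter Finset

lemma sum_range_two_mul_pair (f : ℕ → ℝ) (k : ℕ) :
    ∑ i ∈ Finset.range (2 * k), f i = ∑ j ∈ Finset.range k, (f (2 * j) + f (2 * j + 1)) := by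
  induction k with
  | zero => simp
  | succ n ih =>
    have h2 : 2 * (n + 1) = (2 * n + 1) + 1 := by ring
    rw [h2, Finset.sum_range_succ, Finset.sum_range_succ, ih, Finset.sum_range_succ]
    ring

/-- Monotonicity of the defect functions under doubling the sampling time: if
`h_t` and `h_{2t}` are the a.e. Birkhoff limits of `(1/t)φ(t,·) − φ̄` under `θ^t`
and of `(1/2t)φ(2t,·) − φ̄` under `θ^{2t}`, then `h_{2t} ≤ h_t` a.e. -/
theorem defect_halving
    {X : Type*} [MeasurableSpace X] (μ : Measure X) [IsProbabilityMeasure μ]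
    (θ : X → X) (hθ : MeasurePreserving θ μ μ)
    (φ : ℕ → X → ℝ) (hmeas : ∀ t, Measurable (φ t))
    (hsub : ∀ k₁ k₂ : ℕ, 1 ≤ k₁ → 1 ≤ k₂ →
      ∀ᵐ x ∂μ, φ (k₁ + k₂) x ≤ φ k₁ x + φ k₂ (θ^[k₁] x))
    (hint : ∀ t : ℕ, 1 ≤ t → Integrable (φ t) μ)
    (φbar : X → ℝ) (hφbarInt : Integrable φbar μ)
    (hφbar : ∀ᵐ x ∂μ, Tendsto (fun s : ℕ => φ s x / s) atTop (nhds (φbar x)))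
    (t : ℕ) (ht : 1 ≤ t) (ht' h2t' : X → ℝ)
    (hht : ∀ᵐ x ∂μ, Tendsto (fun k : ℕ => (1 / (k : ℝ)) *
        ∑ j ∈ Finset.range k, (φ t (θ^[j * t] x) / t - φbar x))
      atTop (nhds (ht' x)))
    (hh2t : ∀ᵐ x ∂μ, Tendsto (fun k : ℕ => (1 / (k : ℝ)) *
        ∑ j ∈ Finset.range k, (φ (2 * t) (θ^[j * (2 * t)] x) / (2 * t) - φbar x))
      atTop (nhds (h2t' x))) :
    ∀ᵐ x ∂μ, h2t' x ≤ ht' x := by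
  have htR : (0 : ℝ) < (t : ℝ) := by exact_mod_cast ht
  -- basic subadditivity at time t, t
  have h0 : ∀ᵐ x ∂μ, φ (2 * t) x ≤ φ t x + φ t (θ^[t] x) := by
    have := hsub t t ht ht
    simpa [two_mul] using this
  -- pulled back along all iterates
  have hA : ∀ᵐ x ∂μ, ∀ j : ℕ,
      φ (2 * t) (θ^[j * (2 * t)] x) ≤
        φ t (θ^[j * (2 * t)] x) + φ t (θ^[t + j * (2 * t)] x) := by
    rw [ae_all_iff]
    intro j
    have hmp : MeasurePreserving (θ^[j * (2 * t)]) μ μ := hθ.iterate _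
    have := hmp.quasiMeasurePreserving.ae h0
    filter_upwards [this] with x hx
    rw [Function.iterate_add_apply]
    exact hx
  filter_upwards [hA, hht, hh2t] with x hx hxT hx2T
  -- limit of the doubled index subsequence of the t-averages
  have h2k : Tendsto (fun k : ℕ => 2 * k) atTop atTop :=
    tendsto_atTop_atTop_of_monotone (fun a b h => by omega) (fun b => ⟨b, by omega⟩)
  have hxT2 : Tendsto (fun k : ℕ => (1 / ((2 * k : ℕ) : ℝ)) *
      ∑ j ∈ Finset.range (2 * k), (φ t (θ^[j * t] x) / t - φbar x))
      atTop (nhds (ht' x)) := hxT.comp h2k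
  refine le_of_tendsto_of_tendsto' hx2T hxT2 (fun k => ?_)
  -- pointwise comparison of the k-th 2t-average with the (2k)-th t-average
  rw [sum_range_two_mul_pair]
  have key : ∀ j : ℕ,
      φ (2 * t) (θ^[j * (2 * t)] x) / (2 * t) - φbar x ≤
        (1 / 2) * ((φ t (θ^[2 * j * t] x) / t - φbar x)
          + (φ t (θ^[(2 * j + 1) * t] x) / t - φbar x)) := by
    intro j
    have e1 : 2 * j * t = j * (2 * t) := by ring
    have e2 : (2 * j + 1) * t = t + j * (2 * t) := by ring
    rw [e1, e2]
    have h := hx j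
    have ht0 : (t : ℝ) ≠ 0 := htR.ne'
    have hRHS : (1 / 2 : ℝ) * ((φ t (θ^[j * (2 * t)] x) / t - φbar x)
          + (φ t (θ^[t + j * (2 * t)] x) / t - φbar x))
        = (φ t (θ^[j * (2 * t)] x) + φ t (θ^[t + j * (2 * t)] x)) / (2 * (t : ℝ)) - φbar x := by
      field_simp
      ring
    rw [hRHS]
    have hdiv : φ (2 * t) (θ^[j * (2 * t)] x) / (2 * (t : ℝ)) ≤
        (φ t (θ^[j * (2 * t)] x) + φ t (θ^[t + j * (2 * t)] x)) / (2 * (t : ℝ)) := by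
      gcongr
    linarith
  calc (1 / (k : ℝ)) * ∑ j ∈ Finset.range k,
          (φ (2 * t) (θ^[j * (2 * t)] x) / (2 * t) - φbar x)
      ≤ (1 / (k : ℝ)) * ∑ j ∈ Finset.range k,
          ((1 / 2) * ((φ t (θ^[2 * j * t] x) / t - φbar x)
            + (φ t (θ^[(2 * j + 1) * t] x) / t - φbar x))) := by
        apply mul_le_mul_of_nonneg_left (Finset.sum_le_sum fun j _ => key j)
        positivity
    _ = (1 / ((2 * k : ℕ) : ℝ)) * ∑ j ∈ Finset.range k,
          ((φ t (θ^[2 * j * t] x) / t - φbar x)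
            + (φ t (θ^[(2 * j + 1) * t] x) / t - φbar x)) := by
        rw [← Finset.mul_sum, ← mul_assoc]
        congr 1
        push_cast
        rw [div_mul_div_comm, one_mul, mul_comm]
    _ = _ := by rw [Finset.mul_sum]
end

section
/- Let γ ∈ (0,1) and let (b_i)_{i=0}^{ℓ−1} be a γ-quasi-expanding string of length ℓ ≥ 2, i.e. a string of positive reals satisfying ∏_{i=1}^{k} b_{ℓ−i} ≥ γ^{−k} for all k = 1, …, ℓ. Then there exists a string of positive reals (c_i)_{i=0}^{ℓ−1} well-adapted to (b_i), meaning: ∏_{i=0}^{ℓ−1} c_i = 1; ∏_{i=0}^{k} c_i ≤ 1 for all 0 ≤ k ≤ ℓ−2; and b_i / c_i ≥ γ^{−1} for all 0 ≤ i < ℓ. Moreover one can choose (c_i) so that min{γ b_i, 1} ≤ c_i ≤ b_i for all i. -/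
/-!
Put `a i = γ * b i`. Quasi-expansion says that every suffix product `S m = ∏_{m ≤ i < ℓ} a i`
is at least `1`, and `S ℓ = 1`. With the running minimum `H m = min_{j ≤ m} S j`, take
`c i = a i * H (i + 1) / H i`. The partial products telescope to `∏_{i < m} c i = H m / S m ≤ 1`,
which is `H ℓ = 1` at `m = ℓ`, and `c i = min (a i) (S i / H i)` lies between `min (a i) 1`
and `a i`.
-/

open Finset

def runningMin {α : Type*} [LinearOrder α] (f : ℕ → α) : ℕ → α
  | 0 => f 0
  | n + 1 => min (runningMin f n) (f (n + 1))

section runningMin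

variable {α : Type*} [LinearOrder α] (f : ℕ → α)

theorem runningMin_succ (n : ℕ) : runningMin f (n + 1) = min (runningMin f n) (f (n + 1)) := rfl

theorem runningMin_le (n : ℕ) : runningMin f n ≤ f n := by
  cases n with
  | zero => exact le_rfl
  | succ n => exact min_le_right _ _

theorem le_runningMin {x : α} (h : ∀ i, x ≤ f i) (n : ℕ) : x ≤ runningMin f n := by
  induction n with
  | zero => exact h 0
  | succ n ih => exact le_min ih (h _)

end runningMin

theorem prod_Ico_eq_prod_range_reflect {M : Type*} [CommMonoid M] (f : ℕ → M) {m n : ℕ}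
    (h : m ≤ n) : ∏ i ∈ Ico m n, f i = ∏ i ∈ range (n - m), f (n - 1 - i) := by
  rw [prod_Ico_eq_prod_range, ← prod_range_reflect]
  refine prod_congr rfl fun i hi => ?_
  rw [mem_range] at hi
  congr 1
  omega

def suffixProd (a : ℕ → ℝ) (ℓ m : ℕ) : ℝ := ∏ i ∈ Ico m ℓ, a i

theorem suffixProd_eq_mul {a : ℕ → ℝ} {ℓ m : ℕ} (hm : m < ℓ) :
    suffixProd a ℓ m = a m * suffixProd a ℓ (m + 1) :=
  prod_eq_prod_Ico_succ_bot hm a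

theorem suffixProd_of_le {a : ℕ → ℝ} {ℓ m : ℕ} (hm : ℓ ≤ m) : suffixProd a ℓ m = 1 := by
  simp [suffixProd, Ico_eq_empty_of_le hm]

noncomputable def adaptedString (a : ℕ → ℝ) (ℓ i : ℕ) : ℝ :=
  a i * (runningMin (suffixProd a ℓ) (i + 1) / runningMin (suffixProd a ℓ) i)

section adaptedString

variable {a : ℕ → ℝ} {ℓ : ℕ}

theorem one_le_runningMin_suffixProd (hS : ∀ m, 1 ≤ suffixProd a ℓ m) (n : ℕ) :
    1 ≤ runningMin (suffixProd a ℓ) n :=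
  le_runningMin _ hS n

theorem prod_adaptedString_mul_suffixProd (hS : ∀ m, 1 ≤ suffixProd a ℓ m) {m : ℕ}
    (hm : m ≤ ℓ) :
    (∏ i ∈ range m, adaptedString a ℓ i) * suffixProd a ℓ m = runningMin (suffixProd a ℓ) m := by
  induction m with
  | zero => simp [runningMin]
  | succ m ih =>
    have hne : runningMin (suffixProd a ℓ) m ≠ 0 :=
      (zero_lt_one.trans_le (one_le_runningMin_suffixProd hS m)).ne'
    calc (∏ i ∈ range (m + 1), adaptedString a ℓ i) * suffixProd a ℓ (m + 1)
        = (∏ i ∈ range m, adaptedString a ℓ i) * (a m * suffixProd a ℓ (m + 1)) *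
            (runningMin (suffixProd a ℓ) (m + 1) / runningMin (suffixProd a ℓ) m) := by
          rw [prod_range_succ, adaptedString]
          ring
      _ = runningMin (suffixProd a ℓ) (m + 1) := by
          rw [← suffixProd_eq_mul (by omega), ih (by omega), mul_div_cancel₀ _ hne]

theorem prod_adaptedString_le_one (hS : ∀ m, 1 ≤ suffixProd a ℓ m) {m : ℕ} (hm : m ≤ ℓ) :
    ∏ i ∈ range m, adaptedString a ℓ i ≤ 1 := by
  have hSm : 0 < suffixProd a ℓ m := zero_lt_one.trans_le (hS m)
  rw [← mul_le_mul_iff_of_pos_right hSm, prod_adaptedString_mul_suffixProd hS hm, one_mul]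
  exact runningMin_le _ m

theorem prod_adaptedString_eq_one (hS : ∀ m, 1 ≤ suffixProd a ℓ m) :
    ∏ i ∈ range ℓ, adaptedString a ℓ i = 1 := by
  have h := prod_adaptedString_mul_suffixProd hS le_rfl
  rw [suffixProd_of_le le_rfl, mul_one] at h
  rw [h]
  refine le_antisymm ?_ (one_le_runningMin_suffixProd hS ℓ)
  exact (runningMin_le _ ℓ).trans (suffixProd_of_le le_rfl).le

theorem adaptedString_eq_min (hS : ∀ m, 1 ≤ suffixProd a ℓ m) {i : ℕ} (hi : i < ℓ)
    (ha : 0 ≤ a i) :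
    adaptedString a ℓ i = min (a i) (suffixProd a ℓ i / runningMin (suffixProd a ℓ) i) := by
  have hpos := zero_lt_one.trans_le (one_le_runningMin_suffixProd hS i)
  rw [adaptedString, runningMin_succ, suffixProd_eq_mul hi, ← mul_div_assoc,
    mul_min_of_nonneg _ _ ha, ← min_div_div_right hpos.le, mul_div_cancel_right₀ _ hpos.ne']

theorem adaptedString_pos (hS : ∀ m, 1 ≤ suffixProd a ℓ m) {i : ℕ} (ha : 0 < a i) :
    0 < adaptedString a ℓ i := by
  have := one_le_runningMin_suffixProd hS
  unfold adaptedString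
  exact mul_pos ha (div_pos (zero_lt_one.trans_le (this _)) (zero_lt_one.trans_le (this _)))

theorem adaptedString_le (hS : ∀ m, 1 ≤ suffixProd a ℓ m) {i : ℕ} (hi : i < ℓ) (ha : 0 ≤ a i) :
    adaptedString a ℓ i ≤ a i :=
  (adaptedString_eq_min hS hi ha).trans_le (min_le_left _ _)

theorem min_one_le_adaptedString (hS : ∀ m, 1 ≤ suffixProd a ℓ m) {i : ℕ} (hi : i < ℓ)
    (ha : 0 ≤ a i) : min (a i) 1 ≤ adaptedString a ℓ i := by
  have hpos := zero_lt_one.trans_le (one_le_runningMin_suffixProd hS i)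
  rw [adaptedString_eq_min hS hi ha]
  exact min_le_min le_rfl ((one_le_div hpos).mpr (runningMin_le _ i))

end adaptedString

theorem one_le_suffixProd_of_quasiExpanding {γ : ℝ} (hγ0 : 0 < γ) {ℓ : ℕ} {b : ℕ → ℝ}
    (hquasi : ∀ k : ℕ, 1 ≤ k → k ≤ ℓ → γ⁻¹ ^ k ≤ ∏ i ∈ range k, b (ℓ - 1 - i)) (m : ℕ) :
    1 ≤ suffixProd (fun i => γ * b i) ℓ m := by
  rcases le_or_gt ℓ m with hm | hm
  · exact (suffixProd_of_le hm).ge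
  have hk := hquasi (ℓ - m) (by omega) (by omega)
  rw [inv_pow, inv_le_iff_one_le_mul₀' (pow_pos hγ0 _)] at hk
  rwa [suffixProd, prod_mul_distrib, prod_const, Nat.card_Ico,
    prod_Ico_eq_prod_range_reflect _ hm.le]

/-- Liao's combinatorial lemma: a `γ`-quasi-expanding string `(b_i)_{i<ℓ}` of
positive reals (all backward partial products `∏_{i=1}^{k} b_{ℓ−i} ≥ γ^{−k}`)
admits a well-adapted string `(c_i)`: total product `1`, all initial partial
products `≤ 1`, with `b_i / c_i ≥ γ⁻¹`, and moreover
`min (γ b_i) 1 ≤ c_i ≤ b_i`. -/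
theorem liao_well_adapted_string (γ : ℝ) (hγ0 : 0 < γ) (hγ1 : γ < 1)
    (ℓ : ℕ) (hℓ : 2 ≤ ℓ) (b : ℕ → ℝ) (hb : ∀ i < ℓ, 0 < b i)
    (hquasi : ∀ k : ℕ, 1 ≤ k → k ≤ ℓ →
      γ⁻¹ ^ k ≤ ∏ i ∈ Finset.range k, b (ℓ - 1 - i)) :
    ∃ c : ℕ → ℝ, (∀ i < ℓ, 0 < c i) ∧
      (∏ i ∈ Finset.range ℓ, c i) = 1 ∧
      (∀ k : ℕ, k ≤ ℓ - 2 → (∏ i ∈ Finset.range (k + 1), c i) ≤ 1) ∧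
      (∀ i < ℓ, γ⁻¹ ≤ b i / c i) ∧
      (∀ i < ℓ, min (γ * b i) 1 ≤ c i ∧ c i ≤ b i) := by
  have hS := one_le_suffixProd_of_quasiExpanding hγ0 hquasi
  have hγb : ∀ i < ℓ, 0 < γ * b i := fun i hi => mul_pos hγ0 (hb i hi)
  have hc_le : ∀ i < ℓ, adaptedString (fun i => γ * b i) ℓ i ≤ γ * b i :=
    fun i hi => adaptedString_le hS hi (hγb i hi).le
  refine ⟨adaptedString (fun i => γ * b i) ℓ, fun i hi => adaptedString_pos hS (hγb i hi),
    prod_adaptedString_eq_one hS, fun k hk => prod_adaptedString_le_one hS (by omega),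
    fun i hi => ?_, fun i hi => ⟨min_one_le_adaptedString hS hi (hγb i hi).le, ?_⟩⟩
  · rw [le_div_iff₀ (adaptedString_pos hS (hγb i hi)), inv_mul_le_iff₀ hγ0]
    exact hc_le i hi
  · exact (hc_le i hi).trans (mul_le_of_le_one_left (hb i hi).le hγ1.le)
end

section
/- Let H > 0 and γ₀ > γ₁ > γ₂ > γ₃ > 0, with Pliss constants N_{γ₀,γ₃}, c_{γ₀,γ₃}, N_{γ₁,γ₂}, c_{γ₁,γ₂} as in the Pliss lemma for bound H. Let m > ℓ > n > 0 be integers and (a_0, …, a_{m−1}) a real sequence with |a_i| ≤ H such that: (1/m)∑_{i<m} a_i ≥ γ₀ (a γ₀-string); (1/t)∑_{i<t} a_i < γ₂ for all t ∈ [n, ℓ] (an (n, γ₂)-obstruction up to ℓ); m ≥ N_{γ₀,γ₃}; m·c_{γ₀,γ₃} > ℓ; ℓ ≥ N_{γ₁,γ₂}; and ℓ·c_{γ₁,γ₂} > n. Then there exists k with ℓ ≤ k < m such that (1/J)∑_{j=1}^{J} a_{k−j} ≥ γ₃ for all 1 ≤ J ≤ k (a γ₃-quasi-expanding string) while (1/k)∑_{i<k}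 a_i < γ₁ (not a γ₁-string). -/
/-!
The Pliss times of level `γ₃` supplied by the `γ₀`-string are more than `ℓ` in number, so one
lies in `[ℓ, m]`; let `k` be the least `γ₃`-Pliss time `≥ ℓ`. If the average of `a` up to `k`
were at least `γ₁`, the Pliss lemma at levels `γ₁, γ₂` would give more than `n` Pliss times of
level `γ₂` in `(0, k]`. None of them lies in `[n, k)`: one in `[n, ℓ]` would contradict the
obstruction, and one in `(ℓ, k)` would be a smaller `γ₃`-Pliss time. So these strictly
increasing times all lie in the `n`-element set `[1, n) ∪ {k}`, a contradiction. Finally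
`k ≠ m`, because the full average is at least `γ₀ > γ₁`.
-/

open Finset

def IsBackwardPliss (a : ℕ → ℝ) (γ : ℝ) (k : ℕ) : Prop :=
  ∀ J : ℕ, 1 ≤ J → J ≤ k → γ ≤ (∑ j ∈ range J, a (k - 1 - j)) / J

namespace IsBackwardPliss

variable {a : ℕ → ℝ} {γ γ' : ℝ} {k : ℕ}

theorem mono (h : IsBackwardPliss a γ' k) (hγ : γ ≤ γ') : IsBackwardPliss a γ k :=
  fun J hJ hJk => hγ.trans (h J hJ hJk)

theorem le_average (h : IsBackwardPliss a γ k) (hk : 1 ≤ k) :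
    γ ≤ (∑ i ∈ range k, a i) / k := by
  simpa only [sum_range_reflect] using h k hk le_rfl

end IsBackwardPliss

theorem lt_apply_of_increasing {r : ℕ} {g : ℕ → ℕ} (hg : ∀ i j, i < j → j < r → g i < g j)
    (hpos : ∀ i < r, 0 < g i) (i : ℕ) (hi : i < r) : i < g i := by
  induction i with
  | zero => exact hpos 0 hi
  | succ i ih =>
    have := ih (by omega)
    have := hg i (i + 1) i.lt_succ_self hi
    omega

theorem le_of_increasing_of_notMem_Ico {r n k : ℕ} {g : ℕ → ℕ} (hn : 0 < n)
    (hg : ∀ i j, i < j → j < r → g i < g j) (hbd : ∀ i < r, 0 < g i ∧ g i ≤ k)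
    (hgap : ∀ i < r, g i ∉ Set.Ico n k) : r ≤ n := by
  by_contra! hnr
  have hlow : n - 1 < g (n - 1) :=
    lt_apply_of_increasing hg (fun i hi => (hbd i hi).1) (n - 1) (by omega)
  have hhigh : g (n - 1) < g n := hg (n - 1) n (by omega) hnr
  exact hgap (n - 1) (by omega) ⟨by omega, hhigh.trans_le (hbd n hnr).2⟩

theorem not_isBackwardPliss_of_obstruction {a : ℕ → ℝ} {γ₂ γ₃ : ℝ} {n ℓ k t : ℕ}
    (h32 : γ₃ ≤ γ₂) (hn : 0 < n)
    (hobs : ∀ t : ℕ, n ≤ t → t ≤ ℓ → (∑ i ∈ range t, a i) / t < γ₂)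
    (hmin : ∀ t, ℓ ≤ t → t < k → ¬ IsBackwardPliss a γ₃ t)
    (hnt : n ≤ t) (htk : t < k) : ¬ IsBackwardPliss a γ₂ t := by
  intro ht
  rcases le_or_gt t ℓ with htℓ | hℓt
  · exact (hobs t hnt htℓ).not_ge (ht.le_average (by omega))
  · exact hmin t hℓt.le htk (ht.mono h32)

theorem mane_sifting_general
    (H γ₀ γ₁ γ₂ γ₃ : ℝ)
    (h32 : γ₃ < γ₂) (h10 : γ₁ < γ₀)
    (N03 : ℕ) (c03 : ℝ)
    (N12 : ℕ) (c12 : ℝ) (hc12 : 0 < c12 ∧ c12 < 1)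
    (hPliss₀₃ : ∀ m' : ℕ, N03 ≤ m' → ∀ b : ℕ → ℝ, (∀ i < m', |b i| ≤ H) →
      γ₀ ≤ (∑ i ∈ Finset.range m', b i) / m' →
      ∃ k : ℕ, ∃ n : ℕ → ℕ, 1 ≤ k ∧ (m' : ℝ) * c03 ≤ k ∧
        (∀ i j, i < j → j < k → n i < n j) ∧
        (∀ i < k, 0 < n i ∧ n i ≤ m') ∧
        ∀ i < k, ∀ J : ℕ, 1 ≤ J → J ≤ n i →
          γ₃ ≤ (∑ j ∈ Finset.range J, b (n i - 1 - j)) / J)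
    (hPliss₁₂ : ∀ m' : ℕ, N12 ≤ m' → ∀ b : ℕ → ℝ, (∀ i < m', |b i| ≤ H) →
      γ₁ ≤ (∑ i ∈ Finset.range m', b i) / m' →
      ∃ k : ℕ, ∃ n : ℕ → ℕ, 1 ≤ k ∧ (m' : ℝ) * c12 ≤ k ∧
        (∀ i j, i < j → j < k → n i < n j) ∧
        (∀ i < k, 0 < n i ∧ n i ≤ m') ∧
        ∀ i < k, ∀ J : ℕ, 1 ≤ J → J ≤ n i →
          γ₂ ≤ (∑ j ∈ Finset.range J, b (n i - 1 - j)) / J)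
    (m ℓ n : ℕ) (hn : 0 < n)
    (a : ℕ → ℝ) (hbd : ∀ i < m, |a i| ≤ H)
    -- `(a_0,…,a_{m−1})` is a `γ₀`-string
    (havg : γ₀ ≤ (∑ i ∈ Finset.range m, a i) / m)
    -- `(a_0,…,a_{ℓ−1})` is an `(n, γ₂)`-obstruction
    (hobs : ∀ t : ℕ, n ≤ t → t ≤ ℓ → (∑ i ∈ Finset.range t, a i) / t < γ₂)
    (hm03 : N03 ≤ m) (hmc : (m : ℝ) * c03 > ℓ)
    (hℓ12 : N12 ≤ ℓ) (hℓc : (ℓ : ℝ) * c12 > n) :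
    ∃ k : ℕ, ℓ ≤ k ∧ k < m ∧
      (∀ J : ℕ, 1 ≤ J → J ≤ k →
        γ₃ ≤ (∑ j ∈ Finset.range J, a (k - 1 - j)) / J) ∧
      (∑ i ∈ Finset.range k, a i) / k < γ₁ := by
  obtain ⟨k₀, f, -, hk₀, hf_mono, hf_bd, hf_pliss⟩ := hPliss₀₃ m hm03 a hbd havg
  have hℓk₀ : ℓ < k₀ := by exact_mod_cast hmc.trans_le hk₀
  have hℓf : ℓ ≤ f ℓ := (lt_apply_of_increasing hf_mono (fun i hi => (hf_bd i hi).1) ℓ hℓk₀).le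
  have hex : ∃ k, ℓ ≤ k ∧ IsBackwardPliss a γ₃ k := ⟨f ℓ, hℓf, hf_pliss ℓ hℓk₀⟩
  classical
  set k := Nat.find hex
  obtain ⟨hℓk, hk_pliss⟩ : ℓ ≤ k ∧ IsBackwardPliss a γ₃ k := Nat.find_spec hex
  have hkm : k ≤ m := (Nat.find_min' hex ⟨hℓf, hf_pliss ℓ hℓk₀⟩).trans (hf_bd ℓ hℓk₀).2
  have hk_avg : (∑ i ∈ range k, a i) / k < γ₁ := by
    by_contra! hge
    obtain ⟨r, g, -, hr, hg_mono, hg_bd, hg_pliss⟩ :=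
      hPliss₁₂ _ (hℓ12.trans hℓk) a (fun i hi => hbd i (hi.trans_le hkm)) hge
    have hrn : r ≤ n := le_of_increasing_of_notMem_Ico hn hg_mono hg_bd fun i hi ht =>
      not_isBackwardPliss_of_obstruction h32.le hn hobs
        (fun t hℓt htk ht => Nat.find_min hex htk ⟨hℓt, ht⟩) ht.1 ht.2 (hg_pliss i hi)
    have hℓk' : (ℓ : ℝ) ≤ k := by exact_mod_cast hℓk
    have hrn' : (r : ℝ) ≤ n := by exact_mod_cast hrn
    linarith [mul_le_mul_of_nonneg_right hℓk' hc12.1.le]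
  refine ⟨k, hℓk, hkm.lt_of_ne fun hkm' => ?_, hk_pliss, hk_avg⟩
  rw [hkm'] at hk_avg
  linarith

/-- Sequence version of Mañé's Lemma II-5 (case `r = 0`): a `γ₀`-average
sequence containing an initial `(n, γ₂)`-obstruction up to `ℓ` admits, under
quantitative density conditions coming from the Pliss constants
`(N_{γ₀,γ₃}, c_{γ₀,γ₃})` and `(N_{γ₁,γ₂}, c_{γ₁,γ₂})` (whose defining Pliss
properties are the hypotheses `hPliss₀₃` and `hPliss₁₂`), a backward
`γ₃`-Pliss time `k ∈ [ℓ, m)` whose forward average up to `k` is below `γ₁`. -/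
theorem mane_sifting
    (H γ₀ γ₁ γ₂ γ₃ : ℝ) (hH : 0 < H)
    (h3 : 0 < γ₃) (h32 : γ₃ < γ₂) (h21 : γ₂ < γ₁) (h10 : γ₁ < γ₀)
    (N03 : ℕ) (hN03 : 1 ≤ N03) (c03 : ℝ) (hc03 : 0 < c03 ∧ c03 < 1)
    (N12 : ℕ) (hN12 : 1 ≤ N12) (c12 : ℝ) (hc12 : 0 < c12 ∧ c12 < 1)
    (hPliss₀₃ : ∀ m' : ℕ, N03 ≤ m' → ∀ b : ℕ → ℝ, (∀ i < m', |b i| ≤ H) →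
      γ₀ ≤ (∑ i ∈ Finset.range m', b i) / m' →
      ∃ k : ℕ, ∃ n : ℕ → ℕ, 1 ≤ k ∧ (m' : ℝ) * c03 ≤ k ∧
        (∀ i j, i < j → j < k → n i < n j) ∧
        (∀ i < k, 0 < n i ∧ n i ≤ m') ∧
        ∀ i < k, ∀ J : ℕ, 1 ≤ J → J ≤ n i →
          γ₃ ≤ (∑ j ∈ Finset.range J, b (n i - 1 - j)) / J)
    (hPliss₁₂ : ∀ m' : ℕ, N12 ≤ m' → ∀ b : ℕ → ℝ, (∀ i < m', |b i| ≤ H) →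
      γ₁ ≤ (∑ i ∈ Finset.range m', b i) / m' →
      ∃ k : ℕ, ∃ n : ℕ → ℕ, 1 ≤ k ∧ (m' : ℝ) * c12 ≤ k ∧
        (∀ i j, i < j → j < k → n i < n j) ∧
        (∀ i < k, 0 < n i ∧ n i ≤ m') ∧
        ∀ i < k, ∀ J : ℕ, 1 ≤ J → J ≤ n i →
          γ₂ ≤ (∑ j ∈ Finset.range J, b (n i - 1 - j)) / J)
    (m ℓ n : ℕ) (hmn : n < ℓ) (hℓm : ℓ < m) (hn : 0 < n)
    (a : ℕ → ℝ) (hbd : ∀ i < m, |a i| ≤ H)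
    -- `(a_0,…,a_{m−1})` is a `γ₀`-string
    (havg : γ₀ ≤ (∑ i ∈ Finset.range m, a i) / m)
    -- `(a_0,…,a_{ℓ−1})` is an `(n, γ₂)`-obstruction
    (hobs : ∀ t : ℕ, n ≤ t → t ≤ ℓ → (∑ i ∈ Finset.range t, a i) / t < γ₂)
    (hm03 : N03 ≤ m) (hmc : (m : ℝ) * c03 > ℓ)
    (hℓ12 : N12 ≤ ℓ) (hℓc : (ℓ : ℝ) * c12 > n) :
    ∃ k : ℕ, ℓ ≤ k ∧ k < m ∧
      (∀ J : ℕ, 1 ≤ J → J ≤ k →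
        γ₃ ≤ (∑ j ∈ Finset.range J, a (k - 1 - j)) / J) ∧
      (∑ i ∈ Finset.range k, a i) / k < γ₁ :=
  mane_sifting_general H γ₀ γ₁ γ₂ γ₃ h32 h10 N03 c03 N12 c12 hc12 hPliss₀₃ hPliss₁₂ m ℓ n hn a hbd
    havg hobs hm03 hmc hℓ12 hℓc
end
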